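/- Let m ≥ 1 be an integer, n ∈ ℕ, σ ∈ (0,1), α = n + σ, β = α + 1, ω > 0, κ ≥ 1. Let b ∈ h^β_per and suppose that for every λ ∈ ℂ with Re λ ≥ ω and every f ∈ h^α_per there exists a unique u ∈ h^{2m+α}_per with λu + (−1)^m·b·u^{(2m)} = f, satisfying ‖u‖_{2m+α} ≤ κ‖f‖_α and |λ|·‖u‖_α ≤ κ‖f‖_α. Then there exists K > 0, depending only on κ and ‖b‖_β, such that for every λ with Re λ ≥ ω and every f ∈ h^β_per there exists a unique u ∈ h^{2m+β}_per with λu + (−1)^m·b·u^{(2m)} = f, satisfying ‖u‖_{2m+β} ≤ K‖f‖_β and |λ|·‖u‖_β ≤ K‖f‖_β. -/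

import Mathlib

open Real

/-- A function `f : ℝ → ℂ` is `2π`-periodic. -/
def Per (f : ℝ → ℂ) : Prop := ∀ x, f (x + 2 * π) = f x

/-- The set of Hölder quotients of `g` with exponent `α`. -/
def holderSet (α : ℝ) (g : ℝ → ℂ) : Set ℝ :=
  {r | ∃ x y : ℝ, x ≠ y ∧ r = ‖g x - g y‖ / |x - y| ^ α}

/-- `[g]_α < ∞`: the Hölder quotients are bounded. -/
def HolderFin (α : ℝ) (g : ℝ → ℂ) : Prop := BddAbove (holderSet α g)

/-- The Hölder seminorm `[g]_α`. -/
noncomputable def hSemi (α : ℝ) (g : ℝ → ℂ) : ℝ := sSup (holderSet α g)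

/-- The little-Hölder-α condition. -/
def LittleHolder (α : ℝ) (g : ℝ → ℂ) : Prop :=
  ∀ η > (0 : ℝ), ∃ δ > (0 : ℝ), ∀ x y : ℝ, 0 < |x - y| → |x - y| < δ →
    ‖g x - g y‖ / |x - y| ^ α < η

/-- Sup-norm of `g`. -/
noncomputable def supAbs (g : ℝ → ℂ) : ℝ := ⨆ x : ℝ, ‖g x‖

/-- The norm `‖f‖_{k+α} = Σ_{j=0}^k sup |f^{(j)}| + [f^{(k)}]_α`. -/
noncomputable def cNorm (k : ℕ) (α : ℝ) (f : ℝ → ℂ) : ℝ :=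
  (∑ j ∈ Finset.range (k + 1), supAbs (iteratedDeriv j f)) + hSemi α (iteratedDeriv k f)

/-- Membership in `C^{k+α}_per` for `α ∈ (0,1)`. -/
def CMem (k : ℕ) (α : ℝ) (f : ℝ → ℂ) : Prop :=
  Per f ∧ ContDiff ℝ k f ∧ HolderFin α (iteratedDeriv k f)

/-- Membership in `h^{k+α}_per`. -/
def hMem (k : ℕ) (α : ℝ) (f : ℝ → ℂ) : Prop :=
  CMem k α f ∧ LittleHolder α (iteratedDeriv k f)

/-!
Differentiate the equation by difference quotients. Let `u ∈ h^{2m+α}` solve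
`λu + (-1)^m b u^{(2m)} = f`. For `t ≠ 0` the quotient `D_t u = (u(· + t) - u) / t` solves the same
equation with right-hand side `G_t = D_t f - (-1)^m D_t b · u^{(2m)}(· + t)`, and
`G_t → g = f' - (-1)^m b' u^{(2m)}` in `C^α` as `t → 0`: difference quotients of `f, b ∈ h^β` and
translates of `u^{(2m)} ∈ h^α` converge in norm precisely because of the little-Hölder condition.
If `v` solves the equation with right-hand side `g`, the a priori estimate coming from uniqueness
gives `‖D_t u - v‖_{2m+α} ≤ κ ‖G_t - g‖_α → 0`, so `u' = v ∈ h^{2m+α}`, i.e. `u ∈ h^{2m+β}`. The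
estimates at level `β` follow from those for `u` and `v`, the product estimate
`‖F G‖_α ≤ 7^n ‖F‖_α ‖G‖_α` and `‖f‖_α ≤ 3 ‖f‖_β`.
-/

open Filter Topology Set
open scoped translate Pointwise

section Holder

variable {σ : ℝ} {g g₁ g₂ : ℝ → ℂ}

lemma hSemi_nonneg (σ : ℝ) (g : ℝ → ℂ) : 0 ≤ hSemi σ g :=
  Real.sSup_nonneg fun _ ⟨_, _, _, hr⟩ => hr ▸ by positivity

lemma forall_holderSet_le_iff {M : ℝ} :
    (∀ r ∈ holderSet σ g, r ≤ M) ↔ ∀ x y, x ≠ y → ‖g x - g y‖ ≤ M * |x - y| ^ σ := by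
  refine ⟨fun h x y hxy => ?_, fun h r ⟨x, y, hxy, hr⟩ => ?_⟩
  · have hpos : 0 < |x - y| ^ σ := by positivity
    exact (div_le_iff₀ hpos).1 (h _ ⟨x, y, hxy, rfl⟩)
  · have hpos : 0 < |x - y| ^ σ := by positivity
    exact hr ▸ (div_le_iff₀ hpos).2 (h x y hxy)

lemma hSemi_le {M : ℝ} (hM : 0 ≤ M) (h : ∀ x y, ‖g x - g y‖ ≤ M * |x - y| ^ σ) :
    hSemi σ g ≤ M :=
  Real.sSup_le (forall_holderSet_le_iff.2 fun x y _ => h x y) hM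

lemma holderFin_of_le {M : ℝ} (h : ∀ x y, ‖g x - g y‖ ≤ M * |x - y| ^ σ) : HolderFin σ g :=
  ⟨M, forall_holderSet_le_iff.2 fun x y _ => h x y⟩

lemma HolderFin.norm_sub_le (hg : HolderFin σ g) (x y : ℝ) :
    ‖g x - g y‖ ≤ hSemi σ g * |x - y| ^ σ := by
  rcases eq_or_ne x y with rfl | hxy
  · simpa using mul_nonneg (hSemi_nonneg σ g) (Real.rpow_nonneg le_rfl σ)
  · exact forall_holderSet_le_iff.1 (fun r hr => le_csSup hg hr) x y hxy

lemma holderSet_translate (a : ℝ) : holderSet σ (τ a g) = holderSet σ g := by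
  ext r
  constructor
  · rintro ⟨x, y, hxy, rfl⟩
    exact ⟨x - a, y - a, by simpa using hxy, by simp⟩
  · rintro ⟨x, y, hxy, rfl⟩
    exact ⟨x + a, y + a, by simpa using hxy, by simp⟩

lemma holderSet_const_smul (c : ℂ) : holderSet σ (c • g) = ‖c‖ • holderSet σ g := by
  ext r
  simp only [holderSet, Set.mem_smul_set, Set.mem_ofPred_eq, Pi.smul_apply, smul_eq_mul]
  constructor
  · rintro ⟨x, y, hxy, rfl⟩
    exact ⟨_, ⟨x, y, hxy, rfl⟩, by rw [← mul_sub, norm_mul, mul_div_assoc]⟩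
  · rintro ⟨_, ⟨x, y, hxy, rfl⟩, rfl⟩
    exact ⟨x, y, hxy, by rw [← mul_sub, norm_mul, mul_div_assoc]⟩

lemma hSemi_const_smul (c : ℂ) : hSemi σ (c • g) = ‖c‖ * hSemi σ g := by
  rw [hSemi, holderSet_const_smul, Real.sSup_smul_of_nonneg (norm_nonneg c), smul_eq_mul, hSemi]

lemma HolderFin.norm_sub_le_of_dominated {c₁ c₂ : ℝ} (hc₁ : 0 ≤ c₁) (hc₂ : 0 ≤ c₂)
    (h₁ : HolderFin σ g₁) (h₂ : HolderFin σ g₂)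
    (h : ∀ x y, ‖g x - g y‖ ≤ c₁ * ‖g₁ x - g₁ y‖ + c₂ * ‖g₂ x - g₂ y‖) (x y : ℝ) :
    ‖g x - g y‖ ≤ (c₁ * hSemi σ g₁ + c₂ * hSemi σ g₂) * |x - y| ^ σ :=
  calc ‖g x - g y‖ ≤ c₁ * (hSemi σ g₁ * |x - y| ^ σ) + c₂ * (hSemi σ g₂ * |x - y| ^ σ) :=
        (h x y).trans (add_le_add (mul_le_mul_of_nonneg_left (h₁.norm_sub_le x y) hc₁)
          (mul_le_mul_of_nonneg_left (h₂.norm_sub_le x y) hc₂))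
    _ = _ := by ring

lemma HolderFin.hSemi_le_of_dominated {c₁ c₂ : ℝ} (hc₁ : 0 ≤ c₁) (hc₂ : 0 ≤ c₂)
    (h₁ : HolderFin σ g₁) (h₂ : HolderFin σ g₂)
    (h : ∀ x y, ‖g x - g y‖ ≤ c₁ * ‖g₁ x - g₁ y‖ + c₂ * ‖g₂ x - g₂ y‖) :
    hSemi σ g ≤ c₁ * hSemi σ g₁ + c₂ * hSemi σ g₂ :=
  hSemi_le (add_nonneg (mul_nonneg hc₁ (hSemi_nonneg _ _)) (mul_nonneg hc₂ (hSemi_nonneg _ _)))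
    (h₁.norm_sub_le_of_dominated hc₁ hc₂ h₂ h)

lemma littleHolder_iff (hσ : 0 < σ) : LittleHolder σ g ↔
    ∀ η > 0, ∃ δ > 0, ∀ x y, |x - y| < δ → ‖g x - g y‖ ≤ η * |x - y| ^ σ := by
  refine ⟨fun hg η hη => ?_, fun hg η hη => ?_⟩
  · obtain ⟨δ, hδ, hgδ⟩ := hg η hη
    refine ⟨δ, hδ, fun x y hxy => ?_⟩
    rcases eq_or_ne x y with rfl | hne
    · simp [Real.zero_rpow hσ.ne']
    · have hpos : 0 < |x - y| ^ σ := by positivity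
      exact ((div_lt_iff₀ hpos).1 (hgδ x y (by positivity) hxy)).le
  · obtain ⟨δ, hδ, hgδ⟩ := hg (η / 2) (by positivity)
    refine ⟨δ, hδ, fun x y hpos hxy => ?_⟩
    rw [div_lt_iff₀ (by positivity)]
    have := hgδ x y hxy
    nlinarith [Real.rpow_pos_of_pos hpos σ]

lemma LittleHolder.of_dominated (hσ : 0 < σ) {c₁ c₂ : ℝ} (hc₁ : 0 ≤ c₁) (hc₂ : 0 ≤ c₂)
    (h₁ : LittleHolder σ g₁) (h₂ : LittleHolder σ g₂)
    (h : ∀ x y, ‖g x - g y‖ ≤ c₁ * ‖g₁ x - g₁ y‖ + c₂ * ‖g₂ x - g₂ y‖) :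
    LittleHolder σ g := by
  rw [littleHolder_iff hσ] at *
  intro η hη
  set ε := η / (c₁ + c₂ + 1)
  obtain ⟨δ₁, hδ₁, hg₁⟩ := h₁ ε (by positivity)
  obtain ⟨δ₂, hδ₂, hg₂⟩ := h₂ ε (by positivity)
  refine ⟨min δ₁ δ₂, lt_min hδ₁ hδ₂, fun x y hxy => ?_⟩
  have hε : (c₁ + c₂ + 1) * ε = η := mul_div_cancel₀ _ (by positivity)
  calc ‖g x - g y‖ ≤ c₁ * (ε * |x - y| ^ σ) + c₂ * (ε * |x - y| ^ σ) :=
        (h x y).trans (add_le_add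
          (mul_le_mul_of_nonneg_left (hg₁ x y (hxy.trans_le (min_le_left _ _))) hc₁)
          (mul_le_mul_of_nonneg_left (hg₂ x y (hxy.trans_le (min_le_right _ _))) hc₂))
    _ ≤ η * |x - y| ^ σ := by
        rw [← hε]
        have : 0 ≤ ε * |x - y| ^ σ := by positivity
        nlinarith

lemma LittleHolder.translate (hσ : 0 < σ) (hg : LittleHolder σ g) (a : ℝ) :
    LittleHolder σ (τ a g) := by
  rw [littleHolder_iff hσ] at *
  intro η hη
  obtain ⟨δ, hδ, hgδ⟩ := hg η hη
  exact ⟨δ, hδ, fun x y hxy => by simpa using hgδ (x - a) (y - a) (by simpa using hxy)⟩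

lemma tendsto_abs_rpow_nhds_zero (hσ : 0 < σ) :
    Tendsto (fun t : ℝ => |t| ^ σ) (𝓝 0) (𝓝 0) := by
  simpa [Real.zero_rpow hσ.ne'] using
    ((continuous_abs.tendsto (0 : ℝ)).rpow_const (Or.inr hσ.le))

lemma littleHolder_of_lipschitz (hσ : σ < 1) {M : ℝ}
    (h : ∀ x y, ‖g x - g y‖ ≤ M * |x - y|) : LittleHolder σ g := by
  intro η hη
  have hlim : Tendsto (fun t : ℝ => M * |t| ^ (1 - σ)) (𝓝 0) (𝓝 0) := by
    simpa using (tendsto_abs_rpow_nhds_zero (sub_pos.2 hσ)).const_mul M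
  obtain ⟨δ, hδ, hsmall⟩ := Metric.eventually_nhds_iff.1 (hlim.eventually (gt_mem_nhds hη))
  refine ⟨δ, hδ, fun x y hpos hxy => ?_⟩
  have hsplit : |x - y| = |x - y| ^ (1 - σ) * |x - y| ^ σ := by
    rw [← Real.rpow_add hpos, sub_add_cancel, Real.rpow_one]
  rw [div_lt_iff₀ (by positivity)]
  calc ‖g x - g y‖ ≤ M * |x - y| ^ (1 - σ) * |x - y| ^ σ := by rw [mul_assoc, ← hsplit]; exact h x y
    _ < η * |x - y| ^ σ := by
        gcongr
        exact hsmall (by simpa [Real.dist_eq] using hxy)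

end Holder

section SupNorm

variable {g : ℝ → ℂ}

lemma supAbs_nonneg (g : ℝ → ℂ) : 0 ≤ supAbs g :=
  Real.iSup_nonneg fun _ => norm_nonneg _

lemma supAbs_le {M : ℝ} (hM : 0 ≤ M) (h : ∀ x, ‖g x‖ ≤ M) : supAbs g ≤ M :=
  Real.iSup_le h hM

lemma Per.norm_le_supAbs (hg : Per g) (hc : Continuous g) (x : ℝ) : ‖g x‖ ≤ supAbs g := by
  obtain ⟨C, hC⟩ := isBounded_iff_forall_norm_le.1
    (Function.Periodic.isBounded_of_continuous hg (by positivity) hc)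
  exact le_ciSup ⟨C, forall_mem_range.2 fun y => hC _ (mem_range_self y)⟩ x

lemma supAbs_translate (a : ℝ) : supAbs (τ a g) = supAbs g :=
  (Equiv.subRight a).iSup_comp (g := fun x => ‖g x‖)

lemma supAbs_const_smul (c : ℂ) : supAbs (c • g) = ‖c‖ * supAbs g := by
  simp only [supAbs, Pi.smul_apply, norm_smul, Real.mul_iSup_of_nonneg (norm_nonneg c)]

lemma Per.iteratedDeriv (hg : Per g) (j : ℕ) : Per (iteratedDeriv j g) := fun x => by
  have h := congrFun (iteratedDeriv_comp_add_const (n := j) (f := g) (s := 2 * π)) x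
  rwa [show (fun z => g (z + 2 * π)) = g from funext hg, eq_comm] at h

lemma Per.translate (hg : Per g) (a : ℝ) : Per (τ a g) := fun x => by
  simpa [sub_add_eq_add_sub] using hg (x - a)

end SupNorm

section IteratedDeriv

variable {j : ℕ} {f g : ℝ → ℂ}

lemma iteratedDeriv_translate (j : ℕ) (a : ℝ) (f : ℝ → ℂ) :
    iteratedDeriv j (τ a f) = τ a (iteratedDeriv j f) :=
  iteratedDeriv_comp_sub_const j f a

lemma iteratedDeriv_const_smul' (j : ℕ) (c : ℂ) (f : ℝ → ℂ) :
    iteratedDeriv j (c • f) = c • iteratedDeriv j f :=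
  funext fun _ => iteratedDeriv_const_smul_field c f

lemma ContDiff.translate {n : WithTop ℕ∞} (hf : ContDiff ℝ n f) (a : ℝ) : ContDiff ℝ n (τ a f) :=
  hf.comp (contDiff_id.sub contDiff_const)

lemma ContDiff.iteratedDeriv_add (hf : ContDiff ℝ j f) (hg : ContDiff ℝ j g) :
    iteratedDeriv j (f + g) = iteratedDeriv j f + iteratedDeriv j g :=
  funext fun _ => _root_.iteratedDeriv_add hf.contDiffAt hg.contDiffAt

lemma ContDiff.iteratedDeriv_sub (hf : ContDiff ℝ j f) (hg : ContDiff ℝ j g) :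
    iteratedDeriv j (f - g) = iteratedDeriv j f - iteratedDeriv j g :=
  funext fun _ => _root_.iteratedDeriv_sub hf.contDiffAt hg.contDiffAt

end IteratedDeriv

section Norm

variable {k j : ℕ} {σ : ℝ} {f g : ℝ → ℂ}

lemma cNorm_nonneg (k : ℕ) (σ : ℝ) (f : ℝ → ℂ) : 0 ≤ cNorm k σ f :=
  add_nonneg (Finset.sum_nonneg fun _ _ => supAbs_nonneg _) (hSemi_nonneg _ _)

lemma supAbs_iteratedDeriv_le_cNorm (hj : j ≤ k) : supAbs (iteratedDeriv j f) ≤ cNorm k σ f := by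
  have := Finset.single_le_sum (f := fun i => supAbs (iteratedDeriv i f))
    (fun i _ => supAbs_nonneg _) (Finset.mem_range.2 (Nat.lt_succ_of_le hj))
  unfold cNorm
  linarith [hSemi_nonneg σ (iteratedDeriv k f)]

lemma hSemi_iteratedDeriv_le_cNorm : hSemi σ (iteratedDeriv k f) ≤ cNorm k σ f :=
  le_add_of_nonneg_left (Finset.sum_nonneg fun _ _ => supAbs_nonneg _)

lemma supAbs_le_cNorm : supAbs f ≤ cNorm k σ f := by
  simpa using supAbs_iteratedDeriv_le_cNorm (σ := σ) (f := f) (Nat.zero_le k)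

lemma cNorm_zero : cNorm 0 σ f = supAbs f + hSemi σ f := by
  simp [cNorm]

lemma cNorm_succ : cNorm (k + 1) σ f = supAbs f + cNorm k σ (deriv f) := by
  simp only [cNorm, Finset.sum_range_succ' _ (k + 1), iteratedDeriv_succ', iteratedDeriv_zero]
  ring

lemma cNorm_deriv_le_cNorm_succ : cNorm k σ (deriv f) ≤ cNorm (k + 1) σ f := by
  rw [cNorm_succ]; linarith [supAbs_nonneg f]

lemma cNorm_translate (a : ℝ) : cNorm k σ (τ a f) = cNorm k σ f := by
  simp only [cNorm, iteratedDeriv_translate, supAbs_translate, hSemi, holderSet_translate]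

lemma cNorm_const_smul (c : ℂ) : cNorm k σ (c • f) = ‖c‖ * cNorm k σ f := by
  simp only [cNorm, iteratedDeriv_const_smul', supAbs_const_smul, hSemi_const_smul,
    Finset.mul_sum, mul_add]

end Norm

section Membership

variable {k j : ℕ} {σ : ℝ} {f g F : ℝ → ℂ}

theorem hMem.per (hf : hMem k σ f) : Per f := hf.1.1

theorem hMem.contDiff (hf : hMem k σ f) : ContDiff ℝ k f := hf.1.2.1

theorem hMem.contDiff_of_le (hf : hMem k σ f) (hj : j ≤ k) : ContDiff ℝ j f :=
  hf.contDiff.of_le (by exact_mod_cast hj)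

theorem hMem.holderFin (hf : hMem k σ f) : HolderFin σ (iteratedDeriv k f) := hf.1.2.2

theorem hMem.littleHolder (hf : hMem k σ f) : LittleHolder σ (iteratedDeriv k f) := hf.2

theorem hMem.norm_iteratedDeriv_le_supAbs (hf : hMem k σ f) (hj : j ≤ k) (x : ℝ) :
    ‖iteratedDeriv j f x‖ ≤ supAbs (iteratedDeriv j f) :=
  (hf.per.iteratedDeriv j).norm_le_supAbs
    (hf.contDiff.continuous_iteratedDeriv j (by exact_mod_cast hj)) x

theorem hMem_zero_iff : hMem 0 σ f ↔ Per f ∧ Continuous f ∧ HolderFin σ f ∧ LittleHolder σ f := by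
  simp [hMem, CMem, contDiff_zero, and_assoc]

theorem hMem.norm_le_cNorm (hf : hMem k σ f) (x : ℝ) : ‖f x‖ ≤ cNorm k σ f :=
  (hf.per.norm_le_supAbs hf.contDiff.continuous x).trans supAbs_le_cNorm

theorem hMem.norm_iteratedDeriv_sub_le (hf : hMem k σ f) (hj : j < k) (x y : ℝ) :
    ‖iteratedDeriv j f x - iteratedDeriv j f y‖ ≤ supAbs (iteratedDeriv (j + 1) f) * |x - y| := by
  have hd : Differentiable ℝ (iteratedDeriv j f) :=
    hf.contDiff.differentiable_iteratedDeriv j (by exact_mod_cast hj)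
  have hbound : ∀ z ∈ univ, ‖deriv (iteratedDeriv j f) z‖ ≤ supAbs (iteratedDeriv (j + 1) f) :=
    fun z _ => by rw [← iteratedDeriv_succ]; exact hf.norm_iteratedDeriv_le_supAbs hj z
  simpa [Real.norm_eq_abs] using convex_univ.norm_image_sub_le_of_norm_deriv_le
    (fun z _ => hd z) hbound (mem_univ y) (mem_univ x)

theorem hMem.add (hσ : 0 < σ) (hf : hMem k σ f) (hg : hMem k σ g) : hMem k σ (f + g) := by
  have hinc : ∀ x y, ‖(iteratedDeriv k f + iteratedDeriv k g) x
      - (iteratedDeriv k f + iteratedDeriv k g) y‖ ≤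
      1 * ‖iteratedDeriv k f x - iteratedDeriv k f y‖
        + 1 * ‖iteratedDeriv k g x - iteratedDeriv k g y‖ := fun x y => by
    simpa only [Pi.add_apply, add_sub_add_comm, one_mul] using norm_add_le _ _
  refine ⟨⟨Function.Periodic.add hf.per hg.per, hf.contDiff.add hg.contDiff, ?_⟩, ?_⟩ <;>
    rw [hf.contDiff.iteratedDeriv_add hg.contDiff]
  · exact holderFin_of_le
      (hf.holderFin.norm_sub_le_of_dominated zero_le_one zero_le_one hg.holderFin hinc)
  · exact hf.littleHolder.of_dominated hσ zero_le_one zero_le_one hg.littleHolder hinc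

theorem hMem.const_smul (hσ : 0 < σ) (c : ℂ) (hf : hMem k σ f) : hMem k σ (c • f) := by
  have hinc : ∀ x y, ‖(c • iteratedDeriv k f) x - (c • iteratedDeriv k f) y‖ ≤
      ‖c‖ * ‖iteratedDeriv k f x - iteratedDeriv k f y‖
        + 0 * ‖iteratedDeriv k f x - iteratedDeriv k f y‖ := fun x y => by
    simp [← mul_sub]
  refine ⟨⟨fun x => by simp [hf.per x], contDiff_const.smul hf.contDiff, ?_⟩, ?_⟩ <;>
    rw [iteratedDeriv_const_smul']
  · exact holderFin_of_le
      (hf.holderFin.norm_sub_le_of_dominated (norm_nonneg c) le_rfl hf.holderFin hinc)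
  · exact hf.littleHolder.of_dominated hσ (norm_nonneg c) le_rfl hf.littleHolder hinc

theorem hMem.sub (hσ : 0 < σ) (hf : hMem k σ f) (hg : hMem k σ g) : hMem k σ (f - g) := by
  simpa [sub_eq_add_neg] using hf.add hσ (hg.const_smul hσ (-1))

theorem hMem.translate (hσ : 0 < σ) (a : ℝ) (hf : hMem k σ f) : hMem k σ (τ a f) := by
  refine ⟨⟨hf.per.translate a, hf.contDiff.translate a, ?_⟩, ?_⟩ <;>
    rw [iteratedDeriv_translate]
  · rw [HolderFin, holderSet_translate]
    exact hf.holderFin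
  · exact hf.littleHolder.translate hσ a


theorem cNorm_le_of_dominated (hf : hMem k σ f) (hg : hMem k σ g)
    (hsup : ∀ j ≤ k, ∀ x, ‖iteratedDeriv j F x‖ ≤ ‖iteratedDeriv j f x‖ + ‖iteratedDeriv j g x‖)
    (hinc : ∀ x y, ‖iteratedDeriv k F x - iteratedDeriv k F y‖ ≤
      1 * ‖iteratedDeriv k f x - iteratedDeriv k f y‖
        + 1 * ‖iteratedDeriv k g x - iteratedDeriv k g y‖) :
    cNorm k σ F ≤ cNorm k σ f + cNorm k σ g := by
  have hS : ∀ j ∈ Finset.range (k + 1), supAbs (iteratedDeriv j F) ≤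
      supAbs (iteratedDeriv j f) + supAbs (iteratedDeriv j g) := fun j hj => by
    have hj := Nat.lt_succ_iff.1 (Finset.mem_range.1 hj)
    exact supAbs_le (add_nonneg (supAbs_nonneg _) (supAbs_nonneg _)) fun x => (hsup j hj x).trans
      (add_le_add (hf.norm_iteratedDeriv_le_supAbs hj x) (hg.norm_iteratedDeriv_le_supAbs hj x))
  have hH := hf.holderFin.hSemi_le_of_dominated zero_le_one zero_le_one hg.holderFin hinc
  have hsum := Finset.sum_le_sum hS
  rw [Finset.sum_add_distrib] at hsum
  simp only [cNorm]
  linarith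

theorem cNorm_add_le (hf : hMem k σ f) (hg : hMem k σ g) :
    cNorm k σ (f + g) ≤ cNorm k σ f + cNorm k σ g := by
  refine cNorm_le_of_dominated hf hg (fun j hj x => ?_) (fun x y => ?_)
  · rw [(hf.contDiff_of_le hj).iteratedDeriv_add
      (hg.contDiff_of_le hj)]
    exact norm_add_le _ _
  · rw [hf.contDiff.iteratedDeriv_add hg.contDiff]
    simpa only [Pi.add_apply, add_sub_add_comm, one_mul] using norm_add_le _ _

theorem cNorm_sub_le (hf : hMem k σ f) (hg : hMem k σ g) :
    cNorm k σ (f - g) ≤ cNorm k σ f + cNorm k σ g := by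
  refine cNorm_le_of_dominated hf hg (fun j hj x => ?_) (fun x y => ?_)
  · rw [(hf.contDiff_of_le hj).iteratedDeriv_sub
      (hg.contDiff_of_le hj)]
    exact norm_sub_le _ _
  · rw [hf.contDiff.iteratedDeriv_sub hg.contDiff]
    simpa only [Pi.sub_apply, sub_sub_sub_comm, one_mul] using norm_sub_le _ _

theorem hMem_deriv (hf : hMem (k + 1) σ f) : hMem k σ (deriv f) := by
  have hD : iteratedDeriv k (deriv f) = iteratedDeriv (k + 1) f := iteratedDeriv_succ'.symm
  refine ⟨⟨?_, ?_, hD ▸ hf.holderFin⟩, hD ▸ hf.littleHolder⟩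
  · simpa using hf.per.iteratedDeriv 1
  · exact (contDiff_succ_iff_deriv.1 (by exact_mod_cast hf.contDiff)).2.2

theorem hMem.of_deriv (hper : Per f) (hd : Differentiable ℝ f) (hf : hMem k σ (deriv f)) :
    hMem (k + 1) σ f := by
  have hD : iteratedDeriv (k + 1) f = iteratedDeriv k (deriv f) := iteratedDeriv_succ'
  refine ⟨⟨hper, ?_, hD ▸ hf.holderFin⟩, hD ▸ hf.littleHolder⟩
  exact_mod_cast contDiff_succ_iff_deriv.2 ⟨hd, by simp, hf.contDiff⟩

theorem hMem_iteratedDeriv (p : ℕ) (hf : hMem (p + k) σ f) :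
    hMem k σ (iteratedDeriv p f) ∧ cNorm k σ (iteratedDeriv p f) ≤ cNorm (p + k) σ f := by
  induction p generalizing f with
  | zero => simpa using hf
  | succ p ih =>
    rw [add_right_comm] at hf
    rw [iteratedDeriv_succ', add_right_comm]
    exact (ih (hMem_deriv hf)).imp_right fun h => h.trans cNorm_deriv_le_cNorm_succ

theorem hMem.norm_iteratedDeriv_sub_le_rpow (hσ0 : 0 ≤ σ) (hσ1 : σ ≤ 1) (hf : hMem k σ f)
    (hj : j < k) (x y : ℝ) : ‖iteratedDeriv j f x - iteratedDeriv j f y‖ ≤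
      (supAbs (iteratedDeriv (j + 1) f) + 2 * supAbs (iteratedDeriv j f)) * |x - y| ^ σ := by
  have hS := supAbs_nonneg (iteratedDeriv (j + 1) f)
  have hS' := supAbs_nonneg (iteratedDeriv j f)
  rcases le_total |x - y| 1 with hle | hge
  · have := Real.self_le_rpow_of_le_one (abs_nonneg (x - y)) hle hσ1
    calc _ ≤ supAbs (iteratedDeriv (j + 1) f) * |x - y| := hf.norm_iteratedDeriv_sub_le hj x y
      _ ≤ _ := by gcongr; linarith
  · have := Real.one_le_rpow hge hσ0
    calc _ ≤ ‖iteratedDeriv j f x‖ + ‖iteratedDeriv j f y‖ := norm_sub_le _ _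
      _ ≤ 2 * supAbs (iteratedDeriv j f) := by
          linarith [hf.norm_iteratedDeriv_le_supAbs hj.le x,
            hf.norm_iteratedDeriv_le_supAbs hj.le y]
      _ ≤ _ := by nlinarith

theorem hMem.of_succ (hσ0 : 0 ≤ σ) (hσ1 : σ < 1) (hf : hMem (k + 1) σ f) : hMem k σ f :=
  ⟨⟨hf.per, hf.contDiff_of_le k.le_succ,
    holderFin_of_le (hf.norm_iteratedDeriv_sub_le_rpow hσ0 hσ1.le k.lt_succ_self)⟩,
    littleHolder_of_lipschitz hσ1 (hf.norm_iteratedDeriv_sub_le k.lt_succ_self)⟩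

theorem cNorm_le_three_mul_cNorm_succ (hσ0 : 0 ≤ σ) (hσ1 : σ ≤ 1) (hf : hMem (k + 1) σ f) :
    cNorm k σ f ≤ 3 * cNorm (k + 1) σ f := by
  have hH := hSemi_le (add_nonneg (supAbs_nonneg _) (mul_nonneg zero_le_two (supAbs_nonneg _)))
    (hf.norm_iteratedDeriv_sub_le_rpow hσ0 hσ1 k.lt_succ_self)
  have hk : supAbs (iteratedDeriv k f) ≤ ∑ j ∈ Finset.range (k + 1), supAbs (iteratedDeriv j f) :=
    Finset.single_le_sum (f := fun j => supAbs (iteratedDeriv j f)) (fun _ _ => supAbs_nonneg _)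
      (Finset.self_mem_range_succ k)
  simp only [cNorm, Finset.sum_range_succ _ (k + 1)]
  linarith [hSemi_nonneg σ (iteratedDeriv (k + 1) f), supAbs_nonneg (iteratedDeriv (k + 1) f)]

end Membership

section Product

variable {k : ℕ} {σ : ℝ} {F G : ℝ → ℂ}

lemma norm_mul_sub_mul_le (hF : Per F) (hFc : Continuous F) (hG : Per G) (hGc : Continuous G)
    (x y : ℝ) : ‖(F * G) x - (F * G) y‖ ≤ supAbs F * ‖G x - G y‖ + supAbs G * ‖F x - F y‖ := by
  have e : (F * G) x - (F * G) y = F x * (G x - G y) + G y * (F x - F y) := by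
    simp only [Pi.mul_apply]; ring
  rw [e]
  refine (norm_add_le _ _).trans (add_le_add ?_ ?_) <;> rw [norm_mul] <;> gcongr
  · exact hF.norm_le_supAbs hFc x
  · exact hG.norm_le_supAbs hGc y

lemma deriv_mul_eq (hF : hMem (k + 1) σ F) (hG : hMem (k + 1) σ G) :
    deriv (F * G) = deriv F * G + F * deriv G :=
  funext fun x => deriv_mul (hF.contDiff.differentiable (by simp) x)
    (hG.contDiff.differentiable (by simp) x)

theorem hMem.mul (hσ0 : 0 < σ) (hσ1 : σ < 1) (hF : hMem k σ F) (hG : hMem k σ G) :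
    hMem k σ (F * G) := by
  induction k generalizing F G with
  | zero =>
    obtain ⟨hFp, hFc, hFh, hFl⟩ := hMem_zero_iff.1 hF
    obtain ⟨hGp, hGc, hGh, hGl⟩ := hMem_zero_iff.1 hG
    have hinc := norm_mul_sub_mul_le hFp hFc hGp hGc
    exact hMem_zero_iff.2 ⟨Function.Periodic.mul hFp hGp, hFc.mul hGc,
      holderFin_of_le (hGh.norm_sub_le_of_dominated (supAbs_nonneg F) (supAbs_nonneg G) hFh hinc),
      hGl.of_dominated hσ0 (supAbs_nonneg F) (supAbs_nonneg G) hFl hinc⟩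
  | succ k ih =>
    refine hMem.of_deriv (Function.Periodic.mul hF.per hG.per)
      ((hF.contDiff.differentiable (by simp)).mul (hG.contDiff.differentiable (by simp))) ?_
    rw [deriv_mul_eq hF hG]
    exact (ih (hMem_deriv hF) (hG.of_succ hσ0.le hσ1)).add hσ0
      (ih (hF.of_succ hσ0.le hσ1) (hMem_deriv hG))

-- `7 = 1 + 2 * 3`: Leibniz rule, and `cNorm_le_three_mul_cNorm_succ` for the underived factor.
theorem cNorm_mul_le (hσ0 : 0 < σ) (hσ1 : σ < 1) (hF : hMem k σ F) (hG : hMem k σ G) :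
    cNorm k σ (F * G) ≤ 7 ^ k * cNorm k σ F * cNorm k σ G := by
  induction k generalizing F G with
  | zero =>
    obtain ⟨hFp, hFc, hFh, -⟩ := hMem_zero_iff.1 hF
    obtain ⟨hGp, hGc, hGh, -⟩ := hMem_zero_iff.1 hG
    have hsup : supAbs (F * G) ≤ supAbs F * supAbs G :=
      supAbs_le (mul_nonneg (supAbs_nonneg F) (supAbs_nonneg G)) fun x => by
        rw [Pi.mul_apply, norm_mul]
        exact mul_le_mul (hFp.norm_le_supAbs hFc x) (hGp.norm_le_supAbs hGc x) (norm_nonneg _)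
          (supAbs_nonneg F)
    have hsemi := hGh.hSemi_le_of_dominated (supAbs_nonneg F) (supAbs_nonneg G) hFh
      (norm_mul_sub_mul_le hFp hFc hGp hGc)
    rw [cNorm_zero, cNorm_zero, cNorm_zero, pow_zero, one_mul]
    nlinarith [supAbs_nonneg F, supAbs_nonneg G, hSemi_nonneg σ F, hSemi_nonneg σ G]
  | succ k ih =>
    set a := cNorm (k + 1) σ F
    set b := cNorm (k + 1) σ G
    have ha := cNorm_nonneg (k + 1) σ F
    have hb := cNorm_nonneg (k + 1) σ G
    have hsup : supAbs (F * G) ≤ a * b :=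
      supAbs_le (mul_nonneg ha hb) fun x => by
        rw [Pi.mul_apply, norm_mul]
        exact mul_le_mul (hF.norm_le_cNorm x) (hG.norm_le_cNorm x) (norm_nonneg _) ha
    have h₁ : cNorm k σ (deriv F * G) ≤ 7 ^ k * a * (3 * b) := by
      refine (ih (hMem_deriv hF) (hG.of_succ hσ0.le hσ1)).trans ?_
      gcongr
      · exact cNorm_nonneg _ _ _
      · exact cNorm_deriv_le_cNorm_succ
      · exact cNorm_le_three_mul_cNorm_succ hσ0.le hσ1.le hG
    have h₂ : cNorm k σ (F * deriv G) ≤ 7 ^ k * (3 * a) * b := by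
      refine (ih (hF.of_succ hσ0.le hσ1) (hMem_deriv hG)).trans ?_
      gcongr
      · exact cNorm_nonneg _ _ _
      · exact cNorm_le_three_mul_cNorm_succ hσ0.le hσ1.le hF
      · exact cNorm_deriv_le_cNorm_succ
    have hsum := cNorm_add_le ((hMem_deriv hF).mul hσ0 hσ1 (hG.of_succ hσ0.le hσ1))
      ((hF.of_succ hσ0.le hσ1).mul hσ0 hσ1 (hMem_deriv hG))
    have h7 : (1 : ℝ) ≤ 7 ^ k := one_le_pow₀ (by norm_num)
    rw [cNorm_succ, deriv_mul_eq hF hG, pow_succ]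
    nlinarith [mul_nonneg (sub_nonneg.2 h7) (mul_nonneg ha hb)]

end Product

section Convergence

variable {k j : ℕ} {σ : ℝ} {f g : ℝ → ℂ}

lemma LittleHolder.tendsto_hSemi_translate_sub (hσ : 0 < σ) (hg : LittleHolder σ g) :
    Tendsto (fun t => hSemi σ (τ t g - g)) (𝓝 0) (𝓝 0) := by
  rw [littleHolder_iff hσ] at hg
  refine tendsto_order.2 ⟨fun a ha => Eventually.of_forall fun t => ha.trans_le
    (hSemi_nonneg _ _), fun η hη => ?_⟩
  obtain ⟨δ, hδ, hgδ⟩ := hg (η / 4) (by positivity)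
  filter_upwards [Metric.ball_mem_nhds 0 hδ] with t ht
  have ht : |t| < δ := by simpa using ht
  have hshift : ∀ z, ‖g (z - t) - g z‖ ≤ η / 4 * |t| ^ σ := fun z => by
    simpa using hgδ (z - t) z (by simpa using ht)
  refine (hSemi_le (by positivity) fun x y => ?_).trans_lt (half_lt_self hη)
  simp only [Pi.sub_apply, translate_apply]
  -- near the diagonal pair the increments over `x - y`, far from it those over `t`
  rcases lt_or_ge |x - y| δ with hxy | hxy
  · calc _ = ‖(g (x - t) - g (y - t)) - (g x - g y)‖ := by ring_nf
      _ ≤ η / 4 * |x - y| ^ σ + η / 4 * |x - y| ^ σ := (norm_sub_le _ _).trans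
          (add_le_add (by simpa using hgδ (x - t) (y - t) (by simpa using hxy)) (hgδ x y hxy))
      _ = η / 2 * |x - y| ^ σ := by ring
  · have hts : |t| ^ σ ≤ |x - y| ^ σ := Real.rpow_le_rpow (abs_nonneg t) (by linarith) hσ.le
    calc _ ≤ η / 4 * |t| ^ σ + η / 4 * |t| ^ σ := (norm_sub_le _ _).trans
          (add_le_add (hshift x) (hshift y))
      _ ≤ η / 2 * |x - y| ^ σ := by nlinarith

theorem hMem.iteratedDeriv_translate_sub (hf : hMem k σ f) (hj : j ≤ k) (t : ℝ) :
    iteratedDeriv j (τ t f - f) = τ t (iteratedDeriv j f) - iteratedDeriv j f := by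
  have hcd := hf.contDiff_of_le hj
  rw [(hcd.translate t).iteratedDeriv_sub hcd, iteratedDeriv_translate]

theorem hMem.supAbs_translate_sub_le (hf : hMem k σ f) (hj : j ≤ k) (t : ℝ) :
    supAbs (τ t (iteratedDeriv j f) - iteratedDeriv j f) ≤ cNorm k σ f * (|t| + |t| ^ σ) := by
  have hC := cNorm_nonneg k σ f
  refine supAbs_le (by positivity) fun x => ?_
  have hdist : |x - t - x| = |t| := by simp
  simp only [Pi.sub_apply, translate_apply]
  rcases hj.lt_or_eq with hj | rfl
  · calc _ ≤ supAbs (iteratedDeriv (j + 1) f) * |x - t - x| := hf.norm_iteratedDeriv_sub_le hj _ _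
      _ ≤ cNorm k σ f * (|t| + |t| ^ σ) := by
          rw [hdist]
          gcongr
          · exact supAbs_iteratedDeriv_le_cNorm hj
          · exact le_add_of_nonneg_right (by positivity)
  · calc _ ≤ hSemi σ (iteratedDeriv j f) * |x - t - x| ^ σ := hf.holderFin.norm_sub_le _ _
      _ ≤ cNorm j σ f * (|t| + |t| ^ σ) := by
          rw [hdist]
          gcongr
          · exact hSemi_iteratedDeriv_le_cNorm
          · exact le_add_of_nonneg_left (abs_nonneg t)

theorem hMem.tendsto_cNorm_translate_sub (hσ : 0 < σ) (hf : hMem k σ f) :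
    Tendsto (fun t => cNorm k σ (τ t f - f)) (𝓝 0) (𝓝 0) := by
  have hbound : ∀ t, cNorm k σ (τ t f - f) ≤ (k + 1) * (cNorm k σ f * (|t| + |t| ^ σ))
      + hSemi σ (τ t (iteratedDeriv k f) - iteratedDeriv k f) := fun t => by
    rw [cNorm, hf.iteratedDeriv_translate_sub le_rfl]
    gcongr
    calc _ ≤ ∑ _j ∈ Finset.range (k + 1), cNorm k σ f * (|t| + |t| ^ σ) :=
          Finset.sum_le_sum fun j hj => by
            have hj := Nat.lt_succ_iff.1 (Finset.mem_range.1 hj)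
            rw [hf.iteratedDeriv_translate_sub hj]
            exact hf.supAbs_translate_sub_le hj t
      _ = _ := by rw [Finset.sum_const, Finset.card_range, nsmul_eq_mul]; push_cast; ring
  have hlim : Tendsto (fun t => (k + 1) * (cNorm k σ f * (|t| + |t| ^ σ))
      + hSemi σ (τ t (iteratedDeriv k f) - iteratedDeriv k f)) (𝓝 0) (𝓝 0) := by
    simpa using ((((continuous_abs.tendsto 0).add (tendsto_abs_rpow_nhds_zero hσ)).const_mul
      _).const_mul _).add (hf.littleHolder.tendsto_hSemi_translate_sub hσ)
  exact squeeze_zero (fun _ => cNorm_nonneg _ _ _) hbound hlim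

end Convergence

noncomputable def diffQuot (t : ℝ) (f : ℝ → ℂ) : ℝ → ℂ := (t : ℂ)⁻¹ • (τ (-t) f - f)

section DifferenceQuotient

variable {k j : ℕ} {σ : ℝ} {f : ℝ → ℂ}

lemma diffQuot_apply (t : ℝ) (f : ℝ → ℂ) (x : ℝ) :
    diffQuot t f x = (t : ℂ)⁻¹ * (f (x + t) - f x) := by
  simp [diffQuot]

lemma ContDiff.iteratedDeriv_diffQuot (hf : ContDiff ℝ j f) (t : ℝ) :
    iteratedDeriv j (diffQuot t f) = diffQuot t (iteratedDeriv j f) := by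
  rw [diffQuot, iteratedDeriv_const_smul', (hf.translate _).iteratedDeriv_sub hf,
    iteratedDeriv_translate, diffQuot]

theorem hMem_diffQuot (hσ : 0 < σ) (t : ℝ) (hf : hMem k σ f) : hMem k σ (diffQuot t f) :=
  ((hf.translate hσ (-t)).sub hσ hf).const_smul hσ _

lemma norm_slope_sub_le {φ φ' : ℝ → ℂ} {t ε : ℝ} (ht : t ≠ 0)
    (hφ : ∀ s ∈ uIcc 0 t, HasDerivAt φ (φ' s) s) (hε : ∀ s ∈ uIcc 0 t, ‖φ' s - φ' 0‖ ≤ ε) :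
    ‖(t : ℂ)⁻¹ * (φ t - φ 0) - φ' 0‖ ≤ ε := by
  have hΘ : ∀ s ∈ uIcc 0 t, HasDerivWithinAt (fun s : ℝ => φ s - s • φ' 0) (φ' s - φ' 0)
      (uIcc 0 t) s := fun s hs => by
    exact (((hφ s hs).fun_sub ((hasDerivAt_id s).smul_const (φ' 0))).congr_deriv
      (by rw [one_smul])).hasDerivWithinAt
  have hmvt := (convex_uIcc 0 t).norm_image_sub_le_of_norm_hasDerivWithin_le hΘ hε
    left_mem_uIcc right_mem_uIcc
  have ht' : (t : ℂ) ≠ 0 := by exact_mod_cast ht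
  have e : (t : ℂ)⁻¹ * (φ t - φ 0) - φ' 0 =
      (t : ℂ)⁻¹ * ((φ t - t • φ' 0) - (φ 0 - (0 : ℝ) • φ' 0)) := by
    rw [zero_smul, Complex.real_smul]; field_simp; ring
  rw [e, norm_mul, norm_inv, Complex.norm_real, Real.norm_eq_abs, inv_mul_le_iff₀ (abs_pos.2 ht)]
  simpa [mul_comm] using hmvt

theorem hMem.hasDerivAt_iteratedDeriv_add (hf : hMem (k + 1) σ f) (hj : j ≤ k) (x s : ℝ) :
    HasDerivAt (fun s => iteratedDeriv j f (x + s)) (iteratedDeriv j (deriv f) (x + s)) s := by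
  have hd : Differentiable ℝ (iteratedDeriv j f) :=
    hf.contDiff.differentiable_iteratedDeriv j (by exact_mod_cast Nat.lt_succ_of_le hj)
  rw [← iteratedDeriv_succ', iteratedDeriv_succ]
  exact (hd (x + s)).hasDerivAt.comp_const_add x s

theorem hMem.supAbs_diffQuot_sub_le (hσ : 0 < σ) (hf : hMem (k + 1) σ f) (hj : j ≤ k) {t ε : ℝ}
    (ht : t ≠ 0) (hε0 : 0 ≤ ε)
    (hε : ∀ s ∈ uIcc 0 t, cNorm k σ (τ (-s) (deriv f) - deriv f) ≤ ε) :
    supAbs (diffQuot t (iteratedDeriv j f) - iteratedDeriv j (deriv f)) ≤ ε := by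
  have hf' := hMem_deriv hf
  refine supAbs_le hε0 fun x => ?_
  have := norm_slope_sub_le (ε := ε) ht (fun s _ => hf.hasDerivAt_iteratedDeriv_add hj x s)
    fun s hs => ?_
  · simpa [diffQuot_apply] using this
  · calc _ = ‖iteratedDeriv j (τ (-s) (deriv f) - deriv f) x‖ := by
          rw [hf'.iteratedDeriv_translate_sub hj]; simp
      _ ≤ cNorm k σ (τ (-s) (deriv f) - deriv f) :=
          (((hf'.translate hσ (-s)).sub hσ hf').norm_iteratedDeriv_le_supAbs hj x).trans
            (supAbs_iteratedDeriv_le_cNorm hj)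
      _ ≤ ε := hε s hs

theorem hMem.hSemi_diffQuot_sub_le (hσ : 0 < σ) (hf : hMem (k + 1) σ f) {t ε : ℝ}
    (ht : t ≠ 0) (hε0 : 0 ≤ ε)
    (hε : ∀ s ∈ uIcc 0 t, cNorm k σ (τ (-s) (deriv f) - deriv f) ≤ ε) :
    hSemi σ (diffQuot t (iteratedDeriv k f) - iteratedDeriv k (deriv f)) ≤ ε := by
  have hf' := hMem_deriv hf
  refine hSemi_le hε0 fun x y => ?_
  have := norm_slope_sub_le (ε := ε * |x - y| ^ σ) ht
    (fun s _ => (hf.hasDerivAt_iteratedDeriv_add le_rfl x s).fun_sub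
    (hf.hasDerivAt_iteratedDeriv_add le_rfl y s)) fun s hs => ?_
  · simp only [diffQuot_apply, Pi.sub_apply, add_zero] at this ⊢
    convert this using 2
    ring
  · have hmem := (hf'.translate hσ (-s)).sub hσ hf'
    calc _ = ‖iteratedDeriv k (τ (-s) (deriv f) - deriv f) x
          - iteratedDeriv k (τ (-s) (deriv f) - deriv f) y‖ := by
          rw [hf'.iteratedDeriv_translate_sub le_rfl]; simp; ring_nf
      _ ≤ hSemi σ (iteratedDeriv k (τ (-s) (deriv f) - deriv f)) * |x - y| ^ σ :=
          hmem.holderFin.norm_sub_le x y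
      _ ≤ ε * |x - y| ^ σ := by
          gcongr
          exact hSemi_iteratedDeriv_le_cNorm.trans (hε s hs)

theorem hMem.cNorm_diffQuot_sub_deriv_le (hσ : 0 < σ) (hf : hMem (k + 1) σ f) {t ε : ℝ}
    (ht : t ≠ 0) (hε : ∀ s ∈ uIcc 0 t, cNorm k σ (τ (-s) (deriv f) - deriv f) ≤ ε) :
    cNorm k σ (diffQuot t f - deriv f) ≤ (k + 2) * ε := by
  have hε0 : 0 ≤ ε := (cNorm_nonneg _ _ _).trans (hε 0 left_mem_uIcc)
  have hD : ∀ j ≤ k, iteratedDeriv j (diffQuot t f - deriv f) =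
      diffQuot t (iteratedDeriv j f) - iteratedDeriv j (deriv f) := fun j hj => by
    have hj' := hj.trans k.le_succ
    rw [((hMem_diffQuot hσ t hf).contDiff_of_le hj').iteratedDeriv_sub
      ((hMem_deriv hf).contDiff_of_le hj), (hf.contDiff_of_le hj').iteratedDeriv_diffQuot]
  have hsum : ∑ j ∈ Finset.range (k + 1), supAbs (iteratedDeriv j (diffQuot t f - deriv f)) ≤
      ∑ _j ∈ Finset.range (k + 1), ε := Finset.sum_le_sum fun j hj => by
    have hj := Nat.lt_succ_iff.1 (Finset.mem_range.1 hj)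
    rw [hD j hj]
    exact hf.supAbs_diffQuot_sub_le hσ hj ht hε0 hε
  have hsemi := hf.hSemi_diffQuot_sub_le hσ ht hε0 hε
  rw [cNorm, hD k le_rfl]
  calc _ ≤ ∑ _j ∈ Finset.range (k + 1), ε + ε := add_le_add hsum hsemi
    _ = _ := by rw [Finset.sum_const, Finset.card_range, nsmul_eq_mul]; push_cast; ring

theorem hMem.tendsto_cNorm_diffQuot_sub_deriv (hσ : 0 < σ) (hf : hMem (k + 1) σ f) :
    Tendsto (fun t => cNorm k σ (diffQuot t f - deriv f)) (𝓝[≠] 0) (𝓝 0) := by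
  refine tendsto_order.2 ⟨fun a ha => Eventually.of_forall fun t => ha.trans_le
    (cNorm_nonneg _ _ _), fun η hη => ?_⟩
  have hε : 0 < η / (k + 3) := by positivity
  obtain ⟨δ, hδ, hsmall⟩ := Metric.eventually_nhds_iff.1
    (((hMem_deriv hf).tendsto_cNorm_translate_sub hσ).eventually (ge_mem_nhds hε))
  filter_upwards [self_mem_nhdsWithin, nhdsWithin_le_nhds (Metric.ball_mem_nhds 0 hδ)]
    with t ht htδ
  refine (hf.cNorm_diffQuot_sub_deriv_le hσ ht fun s hs => hsmall ?_).trans_lt ?_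
  · have := abs_sub_left_of_mem_uIcc hs
    rw [Metric.mem_ball, Real.dist_eq] at htδ
    rw [Real.dist_eq]
    simp only [sub_zero, abs_neg] at this htδ ⊢
    linarith
  · rw [mul_div_assoc', div_lt_iff₀ (by positivity)]
    nlinarith

end DifferenceQuotient

def ResolventEq (lam : ℂ) (m : ℕ) (b u f : ℝ → ℂ) : Prop :=
  ∀ x, lam * u x + (-1 : ℂ) ^ m * b x * iteratedDeriv (2 * m) u x = f x

def ResolventWellPosed (m k : ℕ) (σ : ℝ) (b : ℝ → ℂ) (lam : ℂ) (K : ℝ) : Prop :=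
  ∀ f, hMem k σ f →
    ∃ u, (hMem (2 * m + k) σ u ∧ ResolventEq lam m b u f ∧
        cNorm (2 * m + k) σ u ≤ K * cNorm k σ f ∧ ‖lam‖ * cNorm k σ u ≤ K * cNorm k σ f) ∧
      ∀ v, hMem (2 * m + k) σ v → ResolventEq lam m b v f → v = u

section Resolvent

variable {m k n : ℕ} {σ κ : ℝ} {lam : ℂ} {b u v f g : ℝ → ℂ}

theorem ResolventEq.sub (hu : ResolventEq lam m b u f) (hv : ResolventEq lam m b v g)
    (hu' : ContDiff ℝ (2 * m : ℕ) u) (hv' : ContDiff ℝ (2 * m : ℕ) v) :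
    ResolventEq lam m b (u - v) (f - g) := fun x => by
  rw [hu'.iteratedDeriv_sub hv', Pi.sub_apply, Pi.sub_apply, Pi.sub_apply, ← hu x, ← hv x]
  ring

theorem ResolventEq.diffQuot (hu : ResolventEq lam m b u f) (hu' : ContDiff ℝ (2 * m : ℕ) u)
    (t : ℝ) :
    ResolventEq lam m b (diffQuot t u)
      (diffQuot t f - (-1 : ℂ) ^ m • (diffQuot t b * τ (-t) (iteratedDeriv (2 * m) u))) :=
  fun x => by
    rw [hu'.iteratedDeriv_diffQuot]
    simp only [diffQuot_apply, Pi.sub_apply, Pi.mul_apply, Pi.smul_apply, smul_eq_mul,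
      translate_apply, sub_neg_eq_add]
    linear_combination (t : ℂ)⁻¹ * (hu (x + t) - hu x)

theorem ResolventWellPosed.cNorm_le (h : ResolventWellPosed m k σ b lam κ)
    (hu : hMem (2 * m + k) σ u) (hf : hMem k σ f) (huf : ResolventEq lam m b u f) :
    cNorm (2 * m + k) σ u ≤ κ * cNorm k σ f := by
  obtain ⟨w, ⟨-, -, hw, -⟩, huniq⟩ := h f hf
  rw [huniq u hu huf]
  exact hw

theorem cNorm_deriv_rhs_le (hσ0 : 0 < σ) (hσ1 : σ < 1) (c : ℂ) {U : ℝ → ℂ}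
    (hf : hMem (k + 1) σ f) (hb : hMem (k + 1) σ b) (hU : hMem k σ U) :
    cNorm k σ (deriv f - c • (deriv b * U)) ≤
      cNorm (k + 1) σ f + ‖c‖ * (7 ^ k * cNorm (k + 1) σ b * cNorm k σ U) := by
  have hbU := cNorm_mul_le hσ0 hσ1 (hMem_deriv hb) hU
  refine (cNorm_sub_le (hMem_deriv hf) (((hMem_deriv hb).mul hσ0 hσ1 hU).const_smul hσ0 c)).trans
    (add_le_add cNorm_deriv_le_cNorm_succ ?_)
  rw [cNorm_const_smul]
  gcongr
  refine hbU.trans (mul_le_mul_of_nonneg_right ?_ (cNorm_nonneg _ _ _))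
  exact mul_le_mul_of_nonneg_left cNorm_deriv_le_cNorm_succ (by positivity)

theorem cNorm_diffQuot_rhs_sub_le (hσ0 : 0 < σ) (hσ1 : σ < 1) (c : ℂ) {U : ℝ → ℂ}
    (hf : hMem (k + 1) σ f) (hb : hMem (k + 1) σ b) (hU : hMem k σ U) (t : ℝ) :
    cNorm k σ ((diffQuot t f - c • (diffQuot t b * τ (-t) U)) - (deriv f - c • (deriv b * U))) ≤
      cNorm k σ (diffQuot t f - deriv f) + ‖c‖ * (7 ^ k * cNorm k σ (diffQuot t b - deriv b)
        * cNorm k σ U + 7 ^ k * cNorm k σ (deriv b) * cNorm k σ (τ (-t) U - U)) := by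
  have hb' := hMem_deriv hb
  have hA := (hMem_diffQuot hσ0 t (hf.of_succ hσ0.le hσ1)).sub hσ0 (hMem_deriv hf)
  have hB := (hMem_diffQuot hσ0 t (hb.of_succ hσ0.le hσ1)).sub hσ0 hb'
  have hτ := hU.translate hσ0 (-t)
  have hP₁ := hB.mul hσ0 hσ1 hτ
  have hP₂ := hb'.mul hσ0 hσ1 (hτ.sub hσ0 hU)
  have e : (diffQuot t f - c • (diffQuot t b * τ (-t) U)) - (deriv f - c • (deriv b * U)) =
      (diffQuot t f - deriv f) - c • ((diffQuot t b - deriv b) * τ (-t) U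
        + deriv b * (τ (-t) U - U)) := by
    ext x
    simp only [Pi.sub_apply, Pi.smul_apply, Pi.mul_apply, Pi.add_apply, smul_eq_mul]
    ring
  rw [e]
  refine (cNorm_sub_le hA ((hP₁.add hσ0 hP₂).const_smul hσ0 c)).trans (add_le_add_right ?_ _)
  rw [cNorm_const_smul]
  gcongr
  refine (cNorm_add_le hP₁ hP₂).trans
    (add_le_add ?_ (cNorm_mul_le hσ0 hσ1 hb' (hτ.sub hσ0 hU)))
  simpa only [cNorm_translate] using cNorm_mul_le hσ0 hσ1 hB hτ

theorem tendsto_cNorm_diffQuot_rhs_sub (hσ0 : 0 < σ) (hσ1 : σ < 1) (c : ℂ) {U : ℝ → ℂ}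
    (hf : hMem (k + 1) σ f) (hb : hMem (k + 1) σ b) (hU : hMem k σ U) :
    Tendsto (fun t => cNorm k σ ((diffQuot t f - c • (diffQuot t b * τ (-t) U))
      - (deriv f - c • (deriv b * U)))) (𝓝[≠] 0) (𝓝 0) := by
  have hτ : Tendsto (fun t => cNorm k σ (τ (-t) U - U)) (𝓝[≠] 0) (𝓝 0) :=
    ((hU.tendsto_cNorm_translate_sub hσ0).comp
      (continuous_neg.tendsto' (0 : ℝ) 0 neg_zero)).mono_left nhdsWithin_le_nhds
  refine squeeze_zero (fun _ => cNorm_nonneg _ _ _)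
    (cNorm_diffQuot_rhs_sub_le hσ0 hσ1 c hf hb hU) ?_
  simpa using (hf.tendsto_cNorm_diffQuot_sub_deriv hσ0).add
    (((((hb.tendsto_cNorm_diffQuot_sub_deriv hσ0).const_mul _).mul_const _).add
      (hτ.const_mul _)).const_mul ‖c‖)

end Resolvent

section Bootstrap

variable {m n : ℕ} {σ κ : ℝ} {lam : ℂ} {b u v f : ℝ → ℂ}

theorem ResolventWellPosed.hasDerivAt (hσ0 : 0 < σ) (hσ1 : σ < 1)
    (hS : ResolventWellPosed m n σ b lam κ) (hf : hMem (n + 1) σ f) (hb : hMem (n + 1) σ b)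
    (hu : hMem (2 * m + n) σ u) (huf : ResolventEq lam m b u f) (hv : hMem (2 * m + n) σ v)
    (hvg : ResolventEq lam m b v (deriv f - (-1 : ℂ) ^ m • (deriv b * iteratedDeriv (2 * m) u)))
    (x : ℝ) : HasDerivAt u (v x) x := by
  set U := iteratedDeriv (2 * m) u
  have hU := (hMem_iteratedDeriv (2 * m) hu).1
  have hle : 2 * m ≤ 2 * m + n := Nat.le_add_right _ _
  have hbound : ∀ t, ‖t⁻¹ • (u (x + t) - u x) - v x‖ ≤ κ * cNorm n σ
      ((diffQuot t f - (-1 : ℂ) ^ m • (diffQuot t b * τ (-t) U))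
        - (deriv f - (-1 : ℂ) ^ m • (deriv b * U))) := fun t => by
    have hG : hMem n σ (diffQuot t f - (-1 : ℂ) ^ m • (diffQuot t b * τ (-t) U)) :=
      (hMem_diffQuot hσ0 t (hf.of_succ hσ0.le hσ1)).sub hσ0 (((hMem_diffQuot hσ0 t
        (hb.of_succ hσ0.le hσ1)).mul hσ0 hσ1 (hU.translate hσ0 _)).const_smul hσ0 _)
    have hg : hMem n σ (deriv f - (-1 : ℂ) ^ m • (deriv b * U)) :=
      (hMem_deriv hf).sub hσ0 (((hMem_deriv hb).mul hσ0 hσ1 hU).const_smul hσ0 _)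
    have hw := (hMem_diffQuot hσ0 t hu).sub hσ0 hv
    have := (hw.norm_le_cNorm x).trans (hS.cNorm_le hw (hG.sub hσ0 hg)
      ((huf.diffQuot (hu.contDiff_of_le hle) t).sub hvg
        ((hMem_diffQuot hσ0 t hu).contDiff_of_le hle) (hv.contDiff_of_le hle)))
    simpa [diffQuot_apply, Complex.real_smul] using this
  rw [hasDerivAt_iff_tendsto_slope_zero, tendsto_iff_norm_sub_tendsto_zero]
  refine squeeze_zero (fun _ => norm_nonneg _) hbound ?_
  simpa using (tendsto_cNorm_diffQuot_rhs_sub hσ0 hσ1 _ hf hb hU).const_mul κ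

theorem ResolventWellPosed.succ (hσ0 : 0 < σ) (hσ1 : σ < 1) (hκ : 0 ≤ κ)
    (hb : hMem (n + 1) σ b) (hS : ResolventWellPosed m n σ b lam κ) :
    ResolventWellPosed m (n + 1) σ b lam (κ * (4 + 3 * 7 ^ n * κ * cNorm (n + 1) σ b)) := by
  intro f hf
  obtain ⟨u, ⟨hu, huf, hu₁, hu₂⟩, huniq⟩ := hS f (hf.of_succ hσ0.le hσ1)
  obtain ⟨hU, hUu⟩ := hMem_iteratedDeriv (2 * m) hu
  set g := deriv f - (-1 : ℂ) ^ m • (deriv b * iteratedDeriv (2 * m) u)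
  have hg : hMem n σ g :=
    (hMem_deriv hf).sub hσ0 (((hMem_deriv hb).mul hσ0 hσ1 hU).const_smul hσ0 _)
  obtain ⟨v, ⟨hv, hvg, hv₁, hv₂⟩, -⟩ := hS g hg
  have hderiv := hS.hasDerivAt hσ0 hσ1 hf hb hu huf hv hvg
  have hdu : deriv u = v := funext fun x => (hderiv x).deriv
  set F := cNorm (n + 1) σ f
  have hfF : κ * cNorm n σ f ≤ κ * (3 * F) :=
    mul_le_mul_of_nonneg_left (cNorm_le_three_mul_cNorm_succ hσ0.le hσ1.le hf) hκ
  have hgF : κ * cNorm n σ g ≤ κ * ((1 + 3 * 7 ^ n * κ * cNorm (n + 1) σ b) * F) := by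
    refine mul_le_mul_of_nonneg_left ((cNorm_deriv_rhs_le hσ0 hσ1 _ hf hb hU).trans ?_) hκ
    rw [norm_pow, norm_neg, norm_one, one_pow, one_mul]
    calc _ ≤ F + 7 ^ n * cNorm (n + 1) σ b * (κ * (3 * F)) := by
          gcongr
          · exact mul_nonneg (by positivity) (cNorm_nonneg _ _ _)
          · exact (hUu.trans hu₁).trans hfF
      _ = _ := by ring
  refine ⟨u, ⟨hMem.of_deriv hu.per (fun x => (hderiv x).differentiableAt) (hdu ▸ hv), huf, ?_, ?_⟩,
    fun w hw hwf => huniq w (hw.of_succ hσ0.le hσ1) hwf⟩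
  · rw [← add_assoc, cNorm_succ, hdu]
    calc supAbs u + cNorm (2 * m + n) σ v ≤ κ * (3 * F)
          + κ * ((1 + 3 * 7 ^ n * κ * cNorm (n + 1) σ b) * F) :=
          add_le_add ((supAbs_le_cNorm.trans hu₁).trans hfF) (hv₁.trans hgF)
      _ = _ := by ring
  · rw [cNorm_succ, hdu, mul_add]
    calc ‖lam‖ * supAbs u + ‖lam‖ * cNorm n σ v ≤ κ * (3 * F)
          + κ * ((1 + 3 * 7 ^ n * κ * cNorm (n + 1) σ b) * F) :=
          add_le_add (((mul_le_mul_of_nonneg_left supAbs_le_cNorm (norm_nonneg _)).trans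
            hu₂).trans hfF) (hv₂.trans hgF)
      _ = _ := by ring

end Bootstrap

theorem regularity_bootstrap_general
    (m n : ℕ) (σ : ℝ) (hσ : σ ∈ Set.Ioo (0 : ℝ) 1)
    (ω κ : ℝ) (hκ : 1 ≤ κ)
    (b : ℝ → ℂ) (hb : hMem (n + 1) σ b)
    (hsol : ∀ lam : ℂ, ω ≤ lam.re → ∀ f, hMem n σ f →
      ∃ u, (hMem (2 * m + n) σ u ∧
          (∀ x, lam * u x + (-1 : ℂ) ^ m * b x * iteratedDeriv (2 * m) u x = f x) ∧
          cNorm (2 * m + n) σ u ≤ κ * cNorm n σ f ∧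
          ‖lam‖ * cNorm n σ u ≤ κ * cNorm n σ f) ∧
        ∀ v, hMem (2 * m + n) σ v →
          (∀ x, lam * v x + (-1 : ℂ) ^ m * b x * iteratedDeriv (2 * m) v x = f x) → v = u) :
    ∃ K > (0 : ℝ), ∀ lam : ℂ, ω ≤ lam.re → ∀ f, hMem (n + 1) σ f →
      ∃ u, (hMem (2 * m + n + 1) σ u ∧
          (∀ x, lam * u x + (-1 : ℂ) ^ m * b x * iteratedDeriv (2 * m) u x = f x) ∧
          cNorm (2 * m + n + 1) σ u ≤ K * cNorm (n + 1) σ f ∧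
          ‖lam‖ * cNorm (n + 1) σ u ≤ K * cNorm (n + 1) σ f) ∧
        ∀ v, hMem (2 * m + n + 1) σ v →
          (∀ x, lam * v x + (-1 : ℂ) ^ m * b x * iteratedDeriv (2 * m) v x = f x) → v = u := by
  have hκ0 : 0 < κ := by linarith
  refine ⟨κ * (4 + 3 * 7 ^ n * κ * cNorm (n + 1) σ b),
    mul_pos hκ0 (by have := cNorm_nonneg (n + 1) σ b; positivity), fun lam hlam => ?_⟩
  exact ResolventWellPosed.succ hσ.1 hσ.2 hκ0.le hb (hsol lam hlam)

/-- Bootstrapping regularity: if the resolvent problem for `b·D^{2m}` is uniquely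
solvable with estimates at the level `α = n + σ` and `b ∈ h^β_per` with `β = α + 1`,
then it is uniquely solvable with estimates at the level `β`, with a constant `K`
depending only on `κ` and `‖b‖_β`. -/
theorem regularity_bootstrap
    (m n : ℕ) (hm : 1 ≤ m) (σ : ℝ) (hσ : σ ∈ Set.Ioo (0 : ℝ) 1)
    (ω κ : ℝ) (hω : 0 < ω) (hκ : 1 ≤ κ)
    (b : ℝ → ℂ) (hb : hMem (n + 1) σ b)
    (hsol : ∀ lam : ℂ, ω ≤ lam.re → ∀ f, hMem n σ f →
      ∃ u, (hMem (2 * m + n) σ u ∧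
          (∀ x, lam * u x + (-1 : ℂ) ^ m * b x * iteratedDeriv (2 * m) u x = f x) ∧
          cNorm (2 * m + n) σ u ≤ κ * cNorm n σ f ∧
          ‖lam‖ * cNorm n σ u ≤ κ * cNorm n σ f) ∧
        ∀ v, hMem (2 * m + n) σ v →
          (∀ x, lam * v x + (-1 : ℂ) ^ m * b x * iteratedDeriv (2 * m) v x = f x) → v = u) :
    ∃ K > (0 : ℝ), ∀ lam : ℂ, ω ≤ lam.re → ∀ f, hMem (n + 1) σ f →
      ∃ u, (hMem (2 * m + n + 1) σ u ∧
          (∀ x, lam * u x + (-1 : ℂ) ^ m * b x * iteratedDeriv (2 * m) u x = f x) ∧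
          cNorm (2 * m + n + 1) σ u ≤ K * cNorm (n + 1) σ f ∧
          ‖lam‖ * cNorm (n + 1) σ u ≤ K * cNorm (n + 1) σ f) ∧
        ∀ v, hMem (2 * m + n + 1) σ v →
          (∀ x, lam * v x + (-1 : ℂ) ^ m * b x * iteratedDeriv (2 * m) v x = f x) → v = u :=
  regularity_bootstrap_general m n σ hσ ω κ hκ b hb hsol
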